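/- arXiv:2003.06622 — 5 statements merged into one kernel-verified Lean document; each statement's English description precedes it below -/
import Mathlib

section
/- Let S_1, S_2 be nonempty finite index sets with |S_1|, |S_2| ≤ m, all a_i > 0, δ = ε·w/(3m) with 0 < w ≤ min(∑_{i∈S_1} a_i, ∑_{i∈S_2} a_i) and ε ∈ (0,1), and let a'_i = ⌊a_i/δ⌋. Then (∑_{i∈S_1} a_i)/(∑_{j∈S_2} a_j) ≤ (∑_{i∈S_1} a'_i)/(∑_{j∈S_2} a'_j) + ε/3, provided ∑_{j∈S_2} a'_j > 0. -/
/-!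
Flooring `a i / δ` loses less than `1` per index, so on the scale of the original weights the
numerator drops by at most `m * δ = ε * w / 3`, while the denominator can only shrink, which
helps. Relative to a denominator of size at least `w`, that loss is at most `ε / 3`.
-/

open Finset

theorem sum_div_sub_card_le_sum_floor {ι : Type*} (S : Finset ι) (x : ι → ℝ) (δ : ℝ) :
    (∑ i ∈ S, x i) / δ - S.card ≤ ∑ i ∈ S, (⌊x i / δ⌋ : ℝ) := by
  have h : ∑ i ∈ S, (x i / δ - 1) ≤ ∑ i ∈ S, (⌊x i / δ⌋ : ℝ) :=
    sum_le_sum fun i _ => (Int.sub_one_lt_floor _).le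
  simpa [sum_sub_distrib, sum_div] using h

theorem sum_floor_le_sum_div {ι : Type*} (S : Finset ι) (x : ι → ℝ) (δ : ℝ) :
    ∑ i ∈ S, (⌊x i / δ⌋ : ℝ) ≤ (∑ i ∈ S, x i) / δ := by
  rw [sum_div]
  exact sum_le_sum fun i _ => Int.floor_le _

theorem sum_floor_nonneg {ι : Type*} (S : Finset ι) {x : ι → ℝ} (hx : ∀ i, 0 ≤ x i) {δ : ℝ}
    (hδ : 0 ≤ δ) : 0 ≤ ∑ i ∈ S, (⌊x i / δ⌋ : ℝ) :=
  sum_nonneg fun i _ => by exact_mod_cast Int.floor_nonneg.mpr (div_nonneg (hx i) hδ)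

theorem div_sub_le_div_of_scaled {A B A' B' c δ : ℝ} (hδ : δ ≠ 0) (hA' : 0 ≤ A') (hB' : 0 < B')
    (hA : A / δ - c ≤ A') (hB : B' ≤ B / δ) :
    A / B - c * δ / B ≤ A' / B' := by
  have hBδ : 0 < B / δ := hB'.trans_le hB
  have hB0 : B ≠ 0 := by rintro rfl; simp at hBδ
  calc A / B - c * δ / B = (A / δ - c) / (B / δ) := by field_simp
    _ ≤ A' / (B / δ) := div_le_div_of_nonneg_right hA hBδ.le
    _ ≤ A' / B' := div_le_div_of_nonneg_left hA' hB' hB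

theorem ratio_le_scaled_ratio_add_general (n m : ℕ) (a : Fin n → ℝ) (ha : ∀ i, 0 < a i)
    (S₁ S₂ : Finset (Fin n)) (h1 : S₁.Nonempty)
    (hc1 : S₁.card ≤ m)
    (ε w : ℝ) (hε : 0 < ε)
    (hw : 0 < w) (hw2 : w ≤ ∑ i ∈ S₂, a i)
    (δ : ℝ) (hδ : δ = ε * w / (3 * m))
    (hpos : 0 < ∑ j ∈ S₂, (⌊a j / δ⌋ : ℝ)) :
    (∑ i ∈ S₁, a i) / (∑ j ∈ S₂, a j) ≤
      (∑ i ∈ S₁, (⌊a i / δ⌋ : ℝ)) / (∑ j ∈ S₂, (⌊a j / δ⌋ : ℝ)) + ε / 3 := by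
  have hm : (0 : ℝ) < m := by exact_mod_cast h1.card_pos.trans_le hc1
  have hδpos : 0 < δ := by rw [hδ]; positivity
  have hB : 0 < ∑ j ∈ S₂, a j := hw.trans_le hw2
  have hlow : (∑ i ∈ S₁, a i) / δ - m ≤ ∑ i ∈ S₁, (⌊a i / δ⌋ : ℝ) :=
    le_trans (by gcongr) (sum_div_sub_card_le_sum_floor S₁ a δ)
  have hratio := div_sub_le_div_of_scaled hδpos.ne'
    (sum_floor_nonneg S₁ (fun i => (ha i).le) hδpos.le) hpos hlow (sum_floor_le_sum_div S₂ a δ)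
  have herr : m * δ / ∑ j ∈ S₂, a j ≤ ε / 3 := by
    have hmδ : m * δ = ε * w / 3 := by rw [hδ]; field_simp
    rw [div_le_iff₀ hB, hmδ]
    nlinarith
  linarith

theorem ratio_le_scaled_ratio_add (n m : ℕ) (a : Fin n → ℝ) (ha : ∀ i, 0 < a i)
    (S₁ S₂ : Finset (Fin n)) (h1 : S₁.Nonempty) (h2 : S₂.Nonempty)
    (hc1 : S₁.card ≤ m) (hc2 : S₂.card ≤ m)
    (ε w : ℝ) (hε : 0 < ε) (hε1 : ε < 1)
    (hw : 0 < w) (hw1 : w ≤ ∑ i ∈ S₁, a i) (hw2 : w ≤ ∑ i ∈ S₂, a i)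
    (δ : ℝ) (hδ : δ = ε * w / (3 * m))
    (hpos : 0 < ∑ j ∈ S₂, (⌊a j / δ⌋ : ℝ)) :
    (∑ i ∈ S₁, a i) / (∑ j ∈ S₂, a j) ≤
      (∑ i ∈ S₁, (⌊a i / δ⌋ : ℝ)) / (∑ j ∈ S₂, (⌊a j / δ⌋ : ℝ)) + ε / 3 :=
  ratio_le_scaled_ratio_add_general n m a ha S₁ S₂ h1 hc1 ε w hε hw hw2 δ hδ hpos
end

section
/- Under the scaling δ = ε·w/(3m) with ε ∈ (0,1), 0 < w ≤ min(∑_{i∈S_1} a_i, ∑_{i∈S_2} a_i), |S_1|, |S_2| ≤ m, and a'_i = ⌊a_i/δ⌋, the scaled ratio satisfies (∑_{i∈S_1} a'_i)/(∑_{j∈S_2} a'_j) ≤ (1 + ε/2)·(∑_{i∈S_1} a_i)/(∑_{j∈S_2} a_j), provided ∑_{j∈S_2} a'_j > 0. -/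
/-! Rounding down loses less than `1` per term, so with `|S₂| ≤ m` and `m δ = ε w / 3 ≤ ε B / 3`
the scaled denominator is at least `B (1 - ε/3) / δ`, while the scaled numerator is at most
`A / δ`, where `A, B` are the two unscaled sums. The claim then reduces to
`1 ≤ (1 + ε/2)(1 - ε/3) = 1 + ε (1 - ε) / 6`. -/

namespace Finset

variable {ι : Type*} (s : Finset ι) (f : ι → ℝ) (δ : ℝ)

theorem sum_floor_div_le_sum_div : ∑ i ∈ s, (⌊f i / δ⌋ : ℝ) ≤ (∑ i ∈ s, f i) / δ := by
  rw [sum_div]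
  exact sum_le_sum fun i _ => Int.floor_le _

theorem sum_div_sub_card_le_sum_floor_div :
    (∑ i ∈ s, f i) / δ - s.card ≤ ∑ i ∈ s, (⌊f i / δ⌋ : ℝ) := by
  rw [sum_div, ← nsmul_one, ← sum_const, ← sum_sub_distrib]
  exact sum_le_sum fun i _ => (Int.sub_one_lt_floor _).le

theorem sum_mul_one_sub_div_le_sum_floor_div (hδ : 0 < δ) {t : ℝ}
    (ht : s.card * δ ≤ t * ∑ i ∈ s, f i) :
    (∑ i ∈ s, f i) * (1 - t) / δ ≤ ∑ i ∈ s, (⌊f i / δ⌋ : ℝ) := by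
  have hcard : (s.card : ℝ) ≤ t * (∑ i ∈ s, f i) / δ := (le_div_iff₀ hδ).2 ht
  calc (∑ i ∈ s, f i) * (1 - t) / δ = (∑ i ∈ s, f i) / δ - t * (∑ i ∈ s, f i) / δ := by ring
    _ ≤ (∑ i ∈ s, f i) / δ - s.card := by linarith
    _ ≤ ∑ i ∈ s, (⌊f i / δ⌋ : ℝ) := s.sum_div_sub_card_le_sum_floor_div f δ

end Finset

theorem one_le_one_add_half_mul_one_sub_third {ε : ℝ} (hε : 0 ≤ ε) (hε1 : ε ≤ 1) :
    1 ≤ (1 + ε / 2) * (1 - ε / 3) := by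
  nlinarith

theorem div_mul_one_sub_third_le {ε A B : ℝ} (hε : 0 ≤ ε) (hε1 : ε ≤ 1) (hA : 0 ≤ A) (hB : 0 < B) :
    A / (B * (1 - ε / 3)) ≤ (1 + ε / 2) * (A / B) := by
  have hε3 : 0 < 1 - ε / 3 := by linarith
  rw [← div_div, div_le_iff₀ hε3, mul_comm (1 + ε / 2), mul_assoc]
  exact le_mul_of_one_le_right (div_nonneg hA hB.le) (one_le_one_add_half_mul_one_sub_third hε hε1)

theorem scaled_ratio_le_ratio_mul_general (n m : ℕ) (a : Fin n → ℝ)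
    (S₁ S₂ : Finset (Fin n))
    (hc2 : S₂.card ≤ m)
    (ε w : ℝ) (hε : 0 < ε) (hε1 : ε < 1)
    (hw : 0 < w) (hw1 : w ≤ ∑ i ∈ S₁, a i) (hw2 : w ≤ ∑ i ∈ S₂, a i)
    (δ : ℝ) (hδ : δ = ε * w / (3 * m))
    (hpos : 0 < ∑ j ∈ S₂, (⌊a j / δ⌋ : ℝ)) :
    (∑ i ∈ S₁, (⌊a i / δ⌋ : ℝ)) / (∑ j ∈ S₂, (⌊a j / δ⌋ : ℝ)) ≤
      (1 + ε / 2) * ((∑ i ∈ S₁, a i) / (∑ j ∈ S₂, a j)) := by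
  set A := ∑ i ∈ S₁, a i
  set B := ∑ j ∈ S₂, a j
  have hA : 0 ≤ A := hw.le.trans hw1
  have hB : 0 < B := hw.trans_le hw2
  -- at `δ = 0` every `⌊a j / δ⌋` is `0`, contradicting `hpos`
  have hδ0 : 0 < δ := by
    refine lt_of_le_of_ne (by rw [hδ]; positivity) fun h => ?_
    simp [← h] at hpos
  -- `m = 0` would give `δ = 0` through division by zero
  have hmδ : (m : ℝ) * δ = ε * w / 3 := by
    have hm : (m : ℝ) ≠ 0 := fun hm => hδ0.ne' (by simpa [hm] using hδ)
    rw [hδ]; field_simp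
  have hden : B * (1 - ε / 3) / δ ≤ ∑ j ∈ S₂, (⌊a j / δ⌋ : ℝ) := by
    refine S₂.sum_mul_one_sub_div_le_sum_floor_div a δ hδ0 ?_
    calc (S₂.card : ℝ) * δ ≤ m * δ := by gcongr
      _ = ε * w / 3 := hmδ
      _ ≤ ε / 3 * B := by linarith [mul_le_mul_of_nonneg_left hw2 hε.le]
  calc (∑ i ∈ S₁, (⌊a i / δ⌋ : ℝ)) / (∑ j ∈ S₂, (⌊a j / δ⌋ : ℝ))
      ≤ (A / δ) / (B * (1 - ε / 3) / δ) :=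
        div_le_div₀ (by positivity) (S₁.sum_floor_div_le_sum_div a δ)
          (div_pos (mul_pos hB (by linarith)) hδ0) hden
    _ = A / (B * (1 - ε / 3)) := div_div_div_cancel_right₀ hδ0.ne' _ _
    _ ≤ (1 + ε / 2) * (A / B) := div_mul_one_sub_third_le hε.le hε1.le hA hB

theorem scaled_ratio_le_ratio_mul (n m : ℕ) (a : Fin n → ℝ) (ha : ∀ i, 0 < a i)
    (S₁ S₂ : Finset (Fin n)) (h1 : S₁.Nonempty) (h2 : S₂.Nonempty)
    (hc1 : S₁.card ≤ m) (hc2 : S₂.card ≤ m)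
    (ε w : ℝ) (hε : 0 < ε) (hε1 : ε < 1)
    (hw : 0 < w) (hw1 : w ≤ ∑ i ∈ S₁, a i) (hw2 : w ≤ ∑ i ∈ S₂, a i)
    (δ : ℝ) (hδ : δ = ε * w / (3 * m))
    (hpos : 0 < ∑ j ∈ S₂, (⌊a j / δ⌋ : ℝ)) :
    (∑ i ∈ S₁, (⌊a i / δ⌋ : ℝ)) / (∑ j ∈ S₂, (⌊a j / δ⌋ : ℝ)) ≤
      (1 + ε / 2) * ((∑ i ∈ S₁, a i) / (∑ j ∈ S₂, a j)) :=
  scaled_ratio_le_ratio_mul_general n m a S₁ S₂ hc2 ε w hε hε1 hw hw1 hw2 δ hδ hpos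
end

section
/- Theorem (approximation preservation under scaling): Let A = {a_1,...,a_n} be positive reals, ε ∈ (0,1), and let S_1Opt, S_2Opt, S_1, S_2 ⊆ {1,...,n} be nonempty sets. Suppose w, m, δ satisfy 0 < w ≤ min(∑_{i∈S_1Opt} a_i, ∑_{i∈S_2Opt} a_i), w ≤ min(∑_{i∈S_1} a_i, ∑_{i∈S_2} a_i), m ≥ max(|S_1Opt|, |S_2Opt|, |S_1|, |S_2|), m ≤ n, and δ = ε·w/(3m). Define a'_i = ⌊a_i/δ⌋ and MR(T_1,T_2,B) = max of the two ratios (∑_{i∈T_1} b_i)/(∑_{j∈T_2} b_j) and its reciprocal. If 1 ≤ MR(S_1,S_2,A') ≤ MR(S_1Opt,S_2Opt,A'), then 1 ≤ MR(S_1,S_2,A) ≤ (1+ε)·MR(S_1Opt,S_2Opt,A). -/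
/-!
Let `X, Y, P, Q` be the sums of `a` over `S₁, S₂, S₁Opt, S₂Opt` and `X', Y', P', Q'` the
corresponding sums of `δ ⌊aᵢ / δ⌋`. Each of these lies at most `m δ = ε w / 3` below the true sum,
and as it is at least `2 w / 3`, this error is at most `ε / 2` times it. An additive error in the
numerator gives `max (X / Y) (Y / X) ≤ max (X' / Y') (Y' / X') + ε / 2`, a multiplicative error in
the denominator gives `max (P' / Q') (Q' / P') ≤ (1 + ε / 2) max (P / Q) (Q / P)`, and since a max
ratio is at least `1` the two combine to the factor `1 + ε`.
-/

/-- Max ratio of two subsets with respect to weights `b`. -/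
noncomputable def MR2 {n : ℕ} (b : Fin n → ℝ) (T₁ T₂ : Finset (Fin n)) : ℝ :=
  max ((∑ i ∈ T₁, b i) / (∑ j ∈ T₂, b j)) ((∑ j ∈ T₂, b j) / (∑ i ∈ T₁, b i))

open Finset

structure IsLowerApprox (η c x' x : ℝ) : Prop where
  pos : 0 < x'
  le : x' ≤ x
  le_add : x ≤ x' + η
  err_le : η ≤ c * x'

namespace IsLowerApprox

variable {η c x y x' y' : ℝ}

lemma pos_right (hx : IsLowerApprox η c x' x) : 0 < x := hx.pos.trans_le hx.le

lemma of_sub_le {w : ℝ} (hw : 0 < w) (hwx : w ≤ x) (hc : 0 ≤ c) (hη : η * (1 + c) ≤ c * w)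
    (hsub : x - η ≤ x') (hle : x' ≤ x) : IsLowerApprox η c x' x where
  pos := by nlinarith
  le := hle
  le_add := by linarith
  err_le := by nlinarith

lemma div_le_div_add (hx : IsLowerApprox η c x' x) (hy : IsLowerApprox η c y' y) :
    x / y ≤ x' / y' + c :=
  calc x / y ≤ x / y' := div_le_div_of_nonneg_left hx.pos_right.le hy.pos hy.le
    _ ≤ (x' + η) / y' := div_le_div_of_nonneg_right hx.le_add hy.pos.le
    _ = x' / y' + η / y' := add_div _ _ _
    _ ≤ x' / y' + c := by gcongr; exact (div_le_iff₀ hy.pos).2 hy.err_le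

lemma div_le_one_add_mul_div (hx : IsLowerApprox η c x' x) (hy : IsLowerApprox η c y' y) :
    x' / y' ≤ (1 + c) * (x / y) := by
  rw [mul_div_assoc', div_le_div_iff₀ hy.pos hy.pos_right]
  calc x' * y ≤ x * (y' + η) := mul_le_mul hx.le hy.le_add hy.pos_right.le hx.pos_right.le
    _ ≤ x * (y' + c * y') := by gcongr; exacts [hx.pos_right.le, hy.err_le]
    _ = (1 + c) * x * y' := by ring

end IsLowerApprox

lemma one_le_max_div_div {x y : ℝ} (hx : 0 < x) (hy : 0 < y) : 1 ≤ max (x / y) (y / x) := by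
  rcases le_total x y with h | h
  · exact ((one_le_div hx).2 h).trans (le_max_right _ _)
  · exact ((one_le_div hy).2 h).trans (le_max_left _ _)

section MaxRatio

variable {x y p q x' y' p' q' η c : ℝ}

lemma max_div_div_le_add_of_isLowerApprox (hx : IsLowerApprox η c x' x)
    (hy : IsLowerApprox η c y' y) : max (x / y) (y / x) ≤ max (x' / y') (y' / x') + c :=
  max_le ((hx.div_le_div_add hy).trans (by gcongr; exact le_max_left _ _))
    ((hy.div_le_div_add hx).trans (by gcongr; exact le_max_right _ _))

lemma max_div_div_le_one_add_mul_of_isLowerApprox (hc : 0 ≤ c) (hp : IsLowerApprox η c p' p)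
    (hq : IsLowerApprox η c q' q) :
    max (p' / q') (q' / p') ≤ (1 + c) * max (p / q) (q / p) :=
  max_le ((hp.div_le_one_add_mul_div hq).trans (by gcongr; exact le_max_left _ _))
    ((hq.div_le_one_add_mul_div hp).trans (by gcongr; exact le_max_right _ _))

lemma max_div_div_le_of_isLowerApprox (hc : 0 ≤ c) (hx : IsLowerApprox η c x' x)
    (hy : IsLowerApprox η c y' y) (hp : IsLowerApprox η c p' p) (hq : IsLowerApprox η c q' q)
    (h : max (x' / y') (y' / x') ≤ max (p' / q') (q' / p')) :
    max (x / y) (y / x) ≤ (1 + 2 * c) * max (p / q) (q / p) := by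
  have hR : 1 ≤ max (p / q) (q / p) := one_le_max_div_div hp.pos_right hq.pos_right
  have := max_div_div_le_one_add_mul_of_isLowerApprox hc hp hq
  linarith [max_div_div_le_add_of_isLowerApprox hx hy, le_mul_of_one_le_right hc hR]

end MaxRatio

lemma MR2_const_mul {n : ℕ} (b : Fin n → ℝ) {δ : ℝ} (hδ : δ ≠ 0) (T₁ T₂ : Finset (Fin n)) :
    MR2 (fun i => δ * b i) T₁ T₂ = MR2 b T₁ T₂ := by
  simp only [MR2, ← mul_sum, mul_div_mul_left _ _ hδ]

section FloorSum

variable {n : ℕ} (a : Fin n → ℝ) {δ : ℝ} (T : Finset (Fin n))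

lemma sum_mul_floor_div_le_sum (hδ : 0 < δ) :
    ∑ i ∈ T, δ * ⌊a i / δ⌋ ≤ ∑ i ∈ T, a i := by
  gcongr with i
  exact (le_div_iff₀' hδ).1 (Int.floor_le _)

lemma sum_sub_card_mul_le_sum_mul_floor_div (hδ : 0 < δ) :
    ∑ i ∈ T, a i - #T * δ ≤ ∑ i ∈ T, δ * ⌊a i / δ⌋ := by
  rw [← nsmul_eq_mul, ← sum_const, ← sum_sub_distrib]
  gcongr with i
  have := (div_lt_iff₀' hδ).1 (Int.lt_floor_add_one (a i / δ))
  linarith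

end FloorSum

theorem approximation_preservation_general (n m : ℕ) (a : Fin n → ℝ)
    (ε : ℝ) (hε : 0 < ε) (hε1 : ε < 1)
    (S₁Opt S₂Opt S₁ S₂ : Finset (Fin n))
    (w δ : ℝ) (hw : 0 < w)
    (hwo1 : w ≤ ∑ i ∈ S₁Opt, a i) (hwo2 : w ≤ ∑ i ∈ S₂Opt, a i)
    (hw1 : w ≤ ∑ i ∈ S₁, a i) (hw2 : w ≤ ∑ i ∈ S₂, a i)
    (hm1 : S₁Opt.card ≤ m) (hm2 : S₂Opt.card ≤ m)
    (hm3 : S₁.card ≤ m) (hm4 : S₂.card ≤ m)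
    (hδ : δ = ε * w / (3 * m))
    (h2' : MR2 (fun i => (⌊a i / δ⌋ : ℝ)) S₁ S₂ ≤
      MR2 (fun i => (⌊a i / δ⌋ : ℝ)) S₁Opt S₂Opt) :
    1 ≤ MR2 a S₁ S₂ ∧ MR2 a S₁ S₂ ≤ (1 + ε) * MR2 a S₁Opt S₂Opt := by
  have hm : (0 : ℝ) < m := by
    have := card_pos.2 (nonempty_of_sum_ne_zero (hw.trans_le hw1).ne')
    exact_mod_cast this.trans_le hm3
  have hδ0 : 0 < δ := by rw [hδ]; positivity
  have approx (T : Finset (Fin n)) (hT : #T ≤ m) (hwT : w ≤ ∑ i ∈ T, a i) :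
      IsLowerApprox (ε * w / 3) (ε / 2) (∑ i ∈ T, δ * ⌊a i / δ⌋) (∑ i ∈ T, a i) := by
    have hTδ : (#T : ℝ) * δ ≤ ε * w / 3 :=
      calc (#T : ℝ) * δ ≤ m * δ := by gcongr
        _ = ε * w / 3 := by rw [hδ]; field_simp
    have hη : ε * w / 3 * (1 + ε / 2) ≤ ε / 2 * w := by
      nlinarith [mul_pos (mul_pos hε hw) (sub_pos.2 hε1)]
    refine .of_sub_le hw hwT (by positivity) hη ?_ (sum_mul_floor_div_le_sum a T hδ0)
    linarith [sum_sub_card_mul_le_sum_mul_floor_div a T hδ0]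
  rw [← MR2_const_mul _ hδ0.ne', ← MR2_const_mul _ hδ0.ne' S₁Opt] at h2'
  refine ⟨one_le_max_div_div (hw.trans_le hw1) (hw.trans_le hw2), ?_⟩
  have := max_div_div_le_of_isLowerApprox (by positivity) (approx S₁ hm3 hw1)
    (approx S₂ hm4 hw2) (approx S₁Opt hm1 hwo1) (approx S₂Opt hm2 hwo2) h2'
  rwa [mul_div_cancel₀ ε two_ne_zero] at this

theorem approximation_preservation (n m : ℕ) (a : Fin n → ℝ) (ha : ∀ i, 0 < a i)
    (ε : ℝ) (hε : 0 < ε) (hε1 : ε < 1)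
    (S₁Opt S₂Opt S₁ S₂ : Finset (Fin n))
    (h1o : S₁Opt.Nonempty) (h2o : S₂Opt.Nonempty)
    (h1 : S₁.Nonempty) (h2 : S₂.Nonempty)
    (w δ : ℝ) (hw : 0 < w)
    (hwo1 : w ≤ ∑ i ∈ S₁Opt, a i) (hwo2 : w ≤ ∑ i ∈ S₂Opt, a i)
    (hw1 : w ≤ ∑ i ∈ S₁, a i) (hw2 : w ≤ ∑ i ∈ S₂, a i)
    (hm1 : S₁Opt.card ≤ m) (hm2 : S₂Opt.card ≤ m)
    (hm3 : S₁.card ≤ m) (hm4 : S₂.card ≤ m) (hmn : m ≤ n)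
    (hδ : δ = ε * w / (3 * m))
    (h1' : 1 ≤ MR2 (fun i => (⌊a i / δ⌋ : ℝ)) S₁ S₂)
    (h2' : MR2 (fun i => (⌊a i / δ⌋ : ℝ)) S₁ S₂ ≤
      MR2 (fun i => (⌊a i / δ⌋ : ℝ)) S₁Opt S₂Opt) :
    1 ≤ MR2 a S₁ S₂ ∧ MR2 a S₁ S₂ ≤ (1 + ε) * MR2 a S₁Opt S₂Opt :=
  approximation_preservation_general n m a ε hε hε1 S₁Opt S₂Opt S₁ S₂ w δ hw hwo1 hwo2 hw1 hw2 hm1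
    hm2 hm3 hm4 hδ h2'
end

section
/- Bounded difference lemma: let Q > 0 and suppose (S'_1, S'_2) is a pair of nonempty disjoint index sets over positive integer weights a_i such that ∑_{i∈S'_1} a_i ≤ Q, every element a_j with j ∈ S'_2 satisfies a_j ≤ Q, and MR(S'_1, S'_2, A) ≥ 1 is optimal in the sense that removing any element m_0 from S'_2 with the remaining sum still exceeding Q would yield 1 ≤ MR(S'_1, S'_2 \ {m_0}, A) ≤ MR(S'_1, S'_2, A). Then ∑_{j∈S'_2} a_j ≤ 2Q; consequently for any S_1 ⊆ S'_1 and S_2 ⊆ S'_2, −2Q ≤ ∑_{i∈S_1} a_i − ∑_{j∈S_2} a_j ≤ Q. -/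
/-!
If `∑_{S₂'} a > 2Q`, removing any `m₀ ∈ S₂'` (with `a m₀ ≤ Q`) leaves a sum `B' > Q ≥ A := ∑_{S₁'} a`.
Once the second sum dominates the first, `MR` is just `B' / A`, so `1 ≤ B' / A ≤ B / A`: the smaller set would
be at least as good, against optimality. The difference bounds then follow from `0 ≤ ∑_{S₁} a ≤ Q` and
`0 ≤ ∑_{S₂} a ≤ 2Q`.
-/

/-- Max ratio of two subset sums of integer weights, as a real number. -/
noncomputable def MRZ (a : ℕ → ℤ) (T₁ T₂ : Finset ℕ) : ℝ :=
  max (((∑ i ∈ T₁, a i : ℤ) : ℝ) / ((∑ j ∈ T₂, a j : ℤ) : ℝ))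
      (((∑ j ∈ T₂, a j : ℤ) : ℝ) / ((∑ i ∈ T₁, a i : ℤ) : ℝ))

lemma max_div_div_eq_div_of_le {x y : ℝ} (hx : 0 < x) (hxy : x ≤ y) :
    max (x / y) (y / x) = y / x :=
  max_eq_right <| ((div_le_one (hx.trans_le hxy)).2 hxy).trans ((one_le_div hx).2 hxy)

section MRZ

variable {a : ℕ → ℤ} {T₁ T₂ T₃ : Finset ℕ}

lemma MRZ_eq_of_sum_le (hpos : 0 < ∑ i ∈ T₁, a i) (hle : ∑ i ∈ T₁, a i ≤ ∑ j ∈ T₂, a j) :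
    MRZ a T₁ T₂ = ((∑ j ∈ T₂, a j : ℤ) : ℝ) / ((∑ i ∈ T₁, a i : ℤ) : ℝ) :=
  max_div_div_eq_div_of_le (by exact_mod_cast hpos) (by exact_mod_cast hle)

lemma one_le_MRZ_of_sum_le (hpos : 0 < ∑ i ∈ T₁, a i) (hle : ∑ i ∈ T₁, a i ≤ ∑ j ∈ T₂, a j) :
    1 ≤ MRZ a T₁ T₂ := by
  rw [MRZ_eq_of_sum_le hpos hle]
  exact (one_le_div (by exact_mod_cast hpos)).2 (by exact_mod_cast hle)

lemma MRZ_le_MRZ_of_sum_le (hpos : 0 < ∑ i ∈ T₁, a i) (h₁₂ : ∑ i ∈ T₁, a i ≤ ∑ j ∈ T₂, a j)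
    (h₂₃ : ∑ j ∈ T₂, a j ≤ ∑ j ∈ T₃, a j) : MRZ a T₁ T₂ ≤ MRZ a T₁ T₃ := by
  rw [MRZ_eq_of_sum_le hpos h₁₂, MRZ_eq_of_sum_le hpos (h₁₂.trans h₂₃)]
  gcongr

end MRZ

lemma lt_sum_erase_of_two_mul_lt_sum {a : ℕ → ℤ} {S : Finset ℕ} {m : ℕ} {Q : ℤ} (hm : m ∈ S)
    (ham : a m ≤ Q) (hS : 2 * Q < ∑ j ∈ S, a j) : Q < ∑ j ∈ S.erase m, a j := by
  rw [Finset.sum_erase_eq_sub hm]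
  omega

theorem bounded_difference_general (a : ℕ → ℤ) (ha : ∀ i, 0 < a i) (Q : ℤ)
    (S₁' S₂' : Finset ℕ) (h1 : S₁'.Nonempty) (h2 : S₂'.Nonempty)
    (hsum1 : ∑ i ∈ S₁', a i ≤ Q)
    (hbound : ∀ j ∈ S₂', a j ≤ Q)
    (hopt : ∀ m₀ ∈ S₂', Q < ∑ j ∈ S₂'.erase m₀, a j →
      ¬ (1 ≤ MRZ a S₁' (S₂'.erase m₀) ∧ MRZ a S₁' (S₂'.erase m₀) ≤ MRZ a S₁' S₂')) :
    (∑ j ∈ S₂', a j ≤ 2 * Q) ∧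
      ∀ S₁ ⊆ S₁', ∀ S₂ ⊆ S₂',
        -2 * Q ≤ (∑ i ∈ S₁, a i) - (∑ j ∈ S₂, a j) ∧
          (∑ i ∈ S₁, a i) - (∑ j ∈ S₂, a j) ≤ Q := by
  have hmono : ∀ {S T : Finset ℕ}, S ⊆ T → ∑ i ∈ S, a i ≤ ∑ i ∈ T, a i := fun hST =>
    Finset.sum_le_sum_of_subset_of_nonneg hST fun i _ _ => (ha i).le
  have hnonneg : ∀ S : Finset ℕ, 0 ≤ ∑ i ∈ S, a i := fun S =>
    Finset.sum_nonneg fun i _ => (ha i).le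
  have hA : 0 < ∑ i ∈ S₁', a i := Finset.sum_pos (fun i _ => ha i) h1
  have hS₂' : ∑ j ∈ S₂', a j ≤ 2 * Q := by
    by_contra! hlarge
    obtain ⟨m₀, hm₀⟩ := h2
    have hQlt := lt_sum_erase_of_two_mul_lt_sum hm₀ (hbound m₀ hm₀) hlarge
    have hAB' : ∑ i ∈ S₁', a i ≤ ∑ j ∈ S₂'.erase m₀, a j := (hsum1.trans_lt hQlt).le
    exact hopt m₀ hm₀ hQlt ⟨one_le_MRZ_of_sum_le hA hAB',
      MRZ_le_MRZ_of_sum_le hA hAB' (hmono (S₂'.erase_subset m₀))⟩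
  refine ⟨hS₂', fun S₁ hS₁ S₂ hS₂ => ?_⟩
  have := hmono hS₁
  have := hmono hS₂
  have := hnonneg S₁
  have := hnonneg S₂
  omega

theorem bounded_difference (a : ℕ → ℤ) (ha : ∀ i, 0 < a i) (Q : ℤ) (hQ : 0 < Q)
    (S₁' S₂' : Finset ℕ) (h1 : S₁'.Nonempty) (h2 : S₂'.Nonempty)
    (hdisj : Disjoint S₁' S₂')
    (hsum1 : ∑ i ∈ S₁', a i ≤ Q)
    (hbound : ∀ j ∈ S₂', a j ≤ Q)
    (hge1 : 1 ≤ MRZ a S₁' S₂')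
    (hopt : ∀ m₀ ∈ S₂', Q < ∑ j ∈ S₂'.erase m₀, a j →
      ¬ (1 ≤ MRZ a S₁' (S₂'.erase m₀) ∧ MRZ a S₁' (S₂'.erase m₀) ≤ MRZ a S₁' S₂')) :
    (∑ j ∈ S₂', a j ≤ 2 * Q) ∧
      ∀ S₁ ⊆ S₁', ∀ S₂ ⊆ S₂',
        -2 * Q ≤ (∑ i ∈ S₁, a i) - (∑ j ∈ S₂, a j) ∧
          (∑ i ∈ S₁, a i) - (∑ j ∈ S₂, a j) ≤ Q :=
  bounded_difference_general a ha Q S₁' S₂' h1 h2 hsum1 hbound hopt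
end

section
/- Equal-difference comparison: let (S_1,S_2) and (S*_1,S*_2) be two pairs of nonempty disjoint index sets over positive weights a_i such that ∑_{i∈S_1} a_i − ∑_{i∈S_2} a_i = ∑_{i∈S*_1} a_i − ∑_{i∈S*_2} a_i and ∑_{i∈S_1} a_i + ∑_{i∈S_2} a_i ≥ ∑_{i∈S*_1} a_i + ∑_{i∈S*_2} a_i. Then MR(S_1,S_2,A) ≤ MR(S*_1,S*_2,A), where MR is the maximum of the two subset-sum ratios. -/
/-!
Writing `d` for the common difference, `max (x / y) (y / x) = 1 + |d| / min x y`, and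
`min x y = (x + y - |d|) / 2`; so for a fixed difference the max ratio decreases as the total
sum grows.
-/

section MaxRatio

variable {α : Type*} [Field α] [LinearOrder α] [IsStrictOrderedRing α] {x y u v : α}

theorem max_div_div_eq_one_add_abs_sub_div_min (hx : 0 < x) (hy : 0 < y) :
    max (x / y) (y / x) = 1 + |x - y| / min x y := by
  rcases le_total y x with hyx | hxy
  · have hle : y / x ≤ x / y := by rw [div_le_div_iff₀ hx hy]; nlinarith
    rw [max_eq_left hle, abs_of_nonneg (sub_nonneg.2 hyx), min_eq_right hyx]
    field_simp
    ring
  · have hle : x / y ≤ y / x := by rw [div_le_div_iff₀ hy hx]; nlinarith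
    rw [max_eq_right hle, abs_sub_comm, abs_of_nonneg (sub_nonneg.2 hxy), min_eq_left hxy]
    field_simp
    ring

theorem min_le_min_of_sub_eq_of_add_le (hd : x - y = u - v) (hs : u + v ≤ x + y) :
    min u v ≤ min x y := by
  have h₁ := two_nsmul_inf_eq_add_sub_abs_sub x y
  have h₂ := two_nsmul_inf_eq_add_sub_abs_sub u v
  rw [abs_sub_comm, hd, abs_sub_comm] at h₁
  rw [two_nsmul] at h₁ h₂
  linarith

theorem max_div_div_le_of_sub_eq_of_add_le (hx : 0 < x) (hy : 0 < y) (hu : 0 < u)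
    (hv : 0 < v) (hd : x - y = u - v) (hs : u + v ≤ x + y) :
    max (x / y) (y / x) ≤ max (u / v) (v / u) := by
  rw [max_div_div_eq_one_add_abs_sub_div_min hx hy, max_div_div_eq_one_add_abs_sub_div_min hu hv,
    hd]
  exact add_le_add_right (div_le_div_of_nonneg_left (abs_nonneg _) (lt_min hu hv)
    (min_le_min_of_sub_eq_of_add_le hd hs)) 1

end MaxRatio

theorem equal_difference_comparison_general (n : ℕ) (a : Fin n → ℝ) (ha : ∀ i, 0 < a i)
    (S₁ S₂ S₁s S₂s : Finset (Fin n))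
    (h1 : S₁.Nonempty) (h2 : S₂.Nonempty) (h1s : S₁s.Nonempty) (h2s : S₂s.Nonempty)
    (hdiff : (∑ i ∈ S₁, a i) - (∑ i ∈ S₂, a i)
        = (∑ i ∈ S₁s, a i) - (∑ i ∈ S₂s, a i))
    (hsum : (∑ i ∈ S₁s, a i) + (∑ i ∈ S₂s, a i)
        ≤ (∑ i ∈ S₁, a i) + (∑ i ∈ S₂, a i)) :
    max ((∑ i ∈ S₁, a i) / (∑ j ∈ S₂, a j)) ((∑ j ∈ S₂, a j) / (∑ i ∈ S₁, a i)) ≤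
      max ((∑ i ∈ S₁s, a i) / (∑ j ∈ S₂s, a j))
          ((∑ j ∈ S₂s, a j) / (∑ i ∈ S₁s, a i)) := by
  have sum_pos {S : Finset (Fin n)} (hS : S.Nonempty) : 0 < ∑ i ∈ S, a i :=
    Finset.sum_pos (fun i _ => ha i) hS
  exact max_div_div_le_of_sub_eq_of_add_le (sum_pos h1) (sum_pos h2) (sum_pos h1s)
    (sum_pos h2s) hdiff hsum

theorem equal_difference_comparison (n : ℕ) (a : Fin n → ℝ) (ha : ∀ i, 0 < a i)
    (S₁ S₂ S₁s S₂s : Finset (Fin n))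
    (h1 : S₁.Nonempty) (h2 : S₂.Nonempty) (h1s : S₁s.Nonempty) (h2s : S₂s.Nonempty)
    (hd1 : Disjoint S₁ S₂) (hd2 : Disjoint S₁s S₂s)
    (hdiff : (∑ i ∈ S₁, a i) - (∑ i ∈ S₂, a i)
        = (∑ i ∈ S₁s, a i) - (∑ i ∈ S₂s, a i))
    (hsum : (∑ i ∈ S₁s, a i) + (∑ i ∈ S₂s, a i)
        ≤ (∑ i ∈ S₁, a i) + (∑ i ∈ S₂, a i)) :
    max ((∑ i ∈ S₁, a i) / (∑ j ∈ S₂, a j)) ((∑ j ∈ S₂, a j) / (∑ i ∈ S₁, a i)) ≤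
      max ((∑ i ∈ S₁s, a i) / (∑ j ∈ S₂s, a j))
          ((∑ j ∈ S₂s, a j) / (∑ i ∈ S₁s, a i)) :=
  equal_difference_comparison_general n a ha S₁ S₂ S₁s S₂s h1 h2 h1s h2s hdiff hsum
end
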